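/- arXiv:1802.04094 — 4 statements merged into one kernel-verified Lean document; each statement's English description precedes it below -/
import Mathlib

section
/- Let (A, B) be a proper Hessenberg pair in ℂ^{n×n}. Then for every k with 1 ≤ k ≤ n−1, the span of the first k columns of A differs from the span of the first k columns of B. -/
open Matrix

/-- A matrix is upper Hessenberg if all entries below the first subdiagonal vanish. -/
def UpperHessenberg {n : ℕ} (A : Matrix (Fin n) (Fin n) ℂ) : Prop :=
  ∀ i j : Fin n, (j : ℕ) + 1 < (i : ℕ) → A i j = 0

/-- A proper Hessenberg pair: both matrices upper Hessenberg, no subdiagonal position with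
both entries zero, linearly independent first columns and linearly independent last rows. -/
def ProperHessPair {n : ℕ} (A B : Matrix (Fin (n + 1)) (Fin (n + 1)) ℂ) : Prop :=
  UpperHessenberg A ∧ UpperHessenberg B ∧
    (∀ i j : Fin (n + 1), (i : ℕ) = (j : ℕ) + 1 → ¬(A i j = 0 ∧ B i j = 0)) ∧
    LinearIndependent ℂ ![fun i => A i 0, fun i => B i 0] ∧
    LinearIndependent ℂ ![fun j => A (Fin.last n) j, fun j => B (Fin.last n) j]

/-!
Induction on `k`. For `k = 1` the spans are the lines through the linearly independent first
columns. Suppose the spans of the first `k + 1` columns agree and look at row `k + 2` (counting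
from 1), where by the Hessenberg shape only column `k + 1` can be nonzero. If that subdiagonal
entry vanished for `A`, the whole common span, in particular column `k + 1` of `B`, would vanish
in row `k + 2`, so both entries would be zero. Hence both are nonzero, and cutting the common span
with the hyperplane `x_{k+2} = 0` gives the span of the first `k` columns of either matrix.
-/

open Submodule

section Span

variable {K ι : Type*} [Field K]

theorem span_range_init_eq_inf_ker_proj {k : ℕ} (v : Fin (k + 1) → ι → K) (r : ι)
    (hv : ∀ j : Fin k, v j.castSucc r = 0) (hlast : v (Fin.last k) r ≠ 0) :
    span K (Set.range (Fin.init v)) =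
      span K (Set.range v) ⊓ LinearMap.ker (LinearMap.proj r) := by
  have hinit : span K (Set.range (Fin.init v)) ≤ LinearMap.ker (LinearMap.proj r) :=
    span_le.2 (by rintro _ ⟨j, rfl⟩; exact hv j)
  refine le_antisymm (le_inf (span_mono (Set.range_comp_subset_range _ _)) hinit) ?_
  intro x hx
  obtain ⟨hx, hxr⟩ := mem_inf.1 hx
  rw [← Fin.snoc_init_self v, Fin.range_snoc, mem_span_insert] at hx
  obtain ⟨a, z, hz, rfl⟩ := hx
  have hzr : z r = 0 := hinit hz
  have ha : a = 0 := by simpa [hzr, hlast] using hxr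
  simpa [ha] using hz

theorem span_singleton_ne_of_linearIndependent_pair {x y : ι → K}
    (h : LinearIndependent K ![x, y]) : span K {x} ≠ span K {y} := by
  intro hxy
  obtain ⟨a, ha⟩ := mem_span_singleton.1 (hxy ▸ mem_span_singleton_self x : x ∈ span K {y})
  exact (linearIndependent_fin2.1 h).2 a ha

end Span

section LeadingColumns

variable {R K : Type*} [Semiring R] [Field K] {m p : ℕ}

/-- The span of the first `k` columns, `k` being read off from `hk`. For `c : Fin p`, `leadingColSpan
A c.isLt` spans columns `0, …, c` and `leadingColSpan A c.isLt.le` columns `0, …, c - 1`. -/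
def leadingColSpan (A : Matrix (Fin m) (Fin p) R) {k : ℕ} (hk : k ≤ p) :
    Submodule R (Fin m → R) :=
  span R (Set.range fun j : Fin k => Aᵀ (Fin.castLE hk j))

theorem leadingColSpan_one (A : Matrix (Fin m) (Fin (p + 1)) R) :
    leadingColSpan A (Nat.le_add_left 1 p) = span R {Aᵀ 0} := by
  rw [leadingColSpan, Set.range_unique]
  rfl

theorem leadingColSpan_le_ker_proj (A : Matrix (Fin m) (Fin p) R) (c : Fin p) (r : Fin m)
    (hv : ∀ j ≤ c, A r j = 0) :
    leadingColSpan A c.isLt ≤ LinearMap.ker (LinearMap.proj r) :=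
  span_le.2 <| by
    rintro _ ⟨j, rfl⟩
    exact hv _ (Fin.le_def.2 (Nat.le_of_lt_succ j.isLt))

theorem leadingColSpan_eq_inf_ker_proj (A : Matrix (Fin m) (Fin p) K) (c : Fin p) (r : Fin m)
    (hv : ∀ j < c, A r j = 0) (hc : A r c ≠ 0) :
    leadingColSpan A c.isLt.le = leadingColSpan A c.isLt ⊓ LinearMap.ker (LinearMap.proj r) :=
  span_range_init_eq_inf_ker_proj (fun j : Fin (c + 1) => Aᵀ (Fin.castLE c.isLt j)) r
    (fun j => hv _ (Fin.lt_def.2 j.isLt)) hc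

end LeadingColumns

section Hessenberg

variable {m : ℕ} {A B : Matrix (Fin m) (Fin m) ℂ}

theorem UpperHessenberg.apply_eq_zero_of_lt (hA : UpperHessenberg A) {r c j : Fin m}
    (hrc : (r : ℕ) = c + 1) (hj : j < c) : A r j = 0 :=
  hA r j (by rw [hrc]; exact Nat.succ_lt_succ hj)

theorem UpperHessenberg.subdiag_eq_zero_of_leadingColSpan_le (hA : UpperHessenberg A)
    {r c : Fin m} (hrc : (r : ℕ) = c + 1) (hAc : A r c = 0)
    (hle : leadingColSpan B c.isLt ≤ leadingColSpan A c.isLt) : B r c = 0 := by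
  have hker := leadingColSpan_le_ker_proj A c r fun j hj => by
    rcases hj.lt_or_eq with hj | rfl
    · exact hA.apply_eq_zero_of_lt hrc hj
    · exact hAc
  exact hker (hle (subset_span ⟨Fin.last c, rfl⟩))

theorem leadingColSpan_eq_of_succ (hA : UpperHessenberg A) (hB : UpperHessenberg B)
    {r c : Fin m} (hrc : (r : ℕ) = c + 1) (hsub : ¬(A r c = 0 ∧ B r c = 0))
    (h : leadingColSpan A c.isLt = leadingColSpan B c.isLt) :
    leadingColSpan A c.isLt.le = leadingColSpan B c.isLt.le := by
  have hAc : A r c ≠ 0 := fun h0 =>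
    hsub ⟨h0, hA.subdiag_eq_zero_of_leadingColSpan_le hrc h0 h.ge⟩
  have hBc : B r c ≠ 0 := fun h0 =>
    hsub ⟨hB.subdiag_eq_zero_of_leadingColSpan_le hrc h0 h.le, h0⟩
  rw [leadingColSpan_eq_inf_ker_proj A c r (fun _ => hA.apply_eq_zero_of_lt hrc) hAc,
    leadingColSpan_eq_inf_ker_proj B c r (fun _ => hB.apply_eq_zero_of_lt hrc) hBc, h]

end Hessenberg

/-- The span of the first k columns of A differs from the span of the first k columns of B,
for every 1 ≤ k ≤ n − 1 (where the matrices are of size (n+1) × (n+1)). -/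
theorem properHessPair_column_spans_differ {n : ℕ}
    (A B : Matrix (Fin (n + 1)) (Fin (n + 1)) ℂ)
    (h : ProperHessPair A B)
    (k : ℕ) (hk1 : 1 ≤ k) (hkn : k ≤ n) :
    Submodule.span ℂ
        (Set.range fun j : Fin k => fun i => A i (Fin.castLE (by omega) j)) ≠
      Submodule.span ℂ
        (Set.range fun j : Fin k => fun i => B i (Fin.castLE (by omega) j)) := by
  obtain ⟨hA, hB, hsub, hcol, -⟩ := h
  change leadingColSpan A _ ≠ leadingColSpan B _
  induction k, hk1 using Nat.le_induction with
  | base =>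
    rw [leadingColSpan_one, leadingColSpan_one]
    exact span_singleton_ne_of_linearIndependent_pair hcol
  | succ k _ ih =>
    intro heq
    exact ih (by omega) <| leadingColSpan_eq_of_succ hA hB (r := ⟨k + 1, by omega⟩)
      (c := ⟨k, by omega⟩) rfl (hsub _ _ rfl) heq
end

section
/- Let A, B ∈ ℂ^{n×n}, let ξ_1,…,ξ_{k−1} ∈ ℂ be such that each A − ξ_i B is invertible, let v ∈ ℂ^n be nonzero, and let ϱ_1,…,ϱ_{k−1} and ϱ̌ be scalars all different from every ξ_j. Then the subspaces span{v, M(ϱ_1,ξ_1)v, M(ϱ_2,ξ_2)M(ϱ_1,ξ_1)v, …, (∏_{i=1}^{k−1} M(ϱ_i,ξ_i))v} and span{v, M(ϱ̌,ξ_1)v, …, (∏_{i=1}^{k−1} M(ϱ̌,ξ_i))v} coincide (nested shift invariance). -/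
open Matrix

/-- The elementary rational function M(ϱ,ξ) = (A − ϱB)(A − ξB)⁻¹. -/
noncomputable def Mfun {n : ℕ} (A B : Matrix (Fin n) (Fin n) ℂ) (ϱ ξ : ℂ) :
    Matrix (Fin n) (Fin n) ℂ :=
  (A - ϱ • B) * (A - ξ • B)⁻¹

/-- The ordered product ∏_{i=1}^{j} M(ϱᵢ, ξᵢ) of elementary rational functions. -/
noncomputable def prodM {n : ℕ} (A B : Matrix (Fin n) (Fin n) ℂ) (ϱ ξ : ℕ → ℂ)
    (j : ℕ) : Matrix (Fin n) (Fin n) ℂ :=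
  ((List.range j).map fun i => Mfun A B (ϱ i) (ξ i)).prod

/-!
Write `S(ξ) = B (A - ξB)⁻¹`, so that `M(ϱ, ξ) = 1 + (ξ - ϱ) S(ξ)`, and let `P_j` be the product
of the first `j` factors. The resolvent identity `S(ξ) - S(ξ') = (ξ - ξ') S(ξ) S(ξ')` gives
`(ξ_j - ϱ_l) P_l S(ξ_j) = P_{l+1} - P_l - (ξ_l - ξ_j) P_{l+1} S(ξ_j)`, so, as long as the zeros
`ϱ` avoid the poles `ξ`, a downward induction on `l ≤ j` shows that right multiplication by
`S(ξ_j)` maps `span {P_0, …, P_j}` into `span {P_0, …, P_{j+1}}`. Since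
`P'_{j+1} = P'_j + (ξ_j - ϱ'_j) P'_j S(ξ_j)`, every product `P'_j` built from any other zeros
`ϱ'` then lies in `span {P_0, …, P_j}`; by symmetry the two spans agree, already as spaces of
matrices.
-/

section PencilResolvent

variable {ι R : Type*} [Fintype ι] [DecidableEq ι] [CommRing R]

noncomputable def pencilResolvent (A B : Matrix ι ι R) (ξ : R) : Matrix ι ι R :=
  B * (A - ξ • B)⁻¹

theorem pencilResolvent_sub_pencilResolvent {A B : Matrix ι ι R} {ξ ξ' : R}
    (h : IsUnit (A - ξ • B)) (h' : IsUnit (A - ξ' • B)) :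
    pencilResolvent A B ξ - pencilResolvent A B ξ' =
      (ξ - ξ') • (pencilResolvent A B ξ * pencilResolvent A B ξ') := by
  have hd := (isUnit_iff_isUnit_det _).1 h
  have hd' := (isUnit_iff_isUnit_det _).1 h'
  have hsub : (A - ξ' • B) - (A - ξ • B) = (ξ - ξ') • B := by rw [sub_smul]; abel
  calc pencilResolvent A B ξ - pencilResolvent A B ξ'
      = B * ((A - ξ • B)⁻¹ * ((A - ξ' • B) - (A - ξ • B)) * (A - ξ' • B)⁻¹) := by
        rw [Matrix.mul_sub, Matrix.sub_mul, nonsing_inv_mul _ hd, Matrix.mul_assoc,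
          mul_nonsing_inv _ hd', Matrix.mul_one, Matrix.one_mul, Matrix.mul_sub]
        rfl
    _ = (ξ - ξ') • (pencilResolvent A B ξ * pencilResolvent A B ξ') := by
        simp only [pencilResolvent, hsub, Matrix.mul_smul, Matrix.smul_mul, Matrix.mul_assoc]

end PencilResolvent

section ShiftInvariance

variable {n : ℕ} {A B : Matrix (Fin n) (Fin n) ℂ}

theorem Mfun_eq_one_add {ϱ ξ : ℂ} (h : IsUnit (A - ξ • B)) :
    Mfun A B ϱ ξ = 1 + (ξ - ϱ) • pencilResolvent A B ξ := by
  have hsplit : A - ϱ • B = (A - ξ • B) + (ξ - ϱ) • B := by rw [sub_smul]; abel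
  rw [Mfun, hsplit, Matrix.add_mul, mul_nonsing_inv _ ((isUnit_iff_isUnit_det _).1 h),
    Matrix.smul_mul, pencilResolvent]

theorem sub_smul_pencilResolvent {ϱ ξ ξ' : ℂ} (h : IsUnit (A - ξ • B))
    (h' : IsUnit (A - ξ' • B)) :
    (ξ' - ϱ) • pencilResolvent A B ξ' =
      Mfun A B ϱ ξ - 1 - (ξ - ξ') • (Mfun A B ϱ ξ * pencilResolvent A B ξ') := by
  have hres := pencilResolvent_sub_pencilResolvent h h'
  rw [Mfun_eq_one_add h, Matrix.add_mul, Matrix.one_mul, Matrix.smul_mul, smul_add,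
    smul_comm (ξ - ξ'), ← hres]
  module

theorem prodM_succ (ϱ ξ : ℕ → ℂ) (j : ℕ) :
    prodM A B ϱ ξ (j + 1) = prodM A B ϱ ξ j * Mfun A B (ϱ j) (ξ j) := by
  simp [prodM, List.range_succ]

variable {ξ : ℕ → ℂ} {K : ℕ}

theorem prodM_mul_pencilResolvent_mem_span {ϱ : ℕ → ℂ}
    (hξ : ∀ i, i < K → IsUnit (A - ξ i • B)) (hϱ : ∀ i j, i < K → j < K → ϱ i ≠ ξ j)
    {j l : ℕ} (hj : j < K) (hl : l ≤ j) :
    prodM A B ϱ ξ l * pencilResolvent A B (ξ j) ∈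
      Submodule.span ℂ (prodM A B ϱ ξ '' Set.Iic (j + 1)) := by
  set W := Submodule.span ℂ (prodM A B ϱ ξ '' Set.Iic (j + 1))
  have mem : ∀ m ≤ j + 1, prodM A B ϱ ξ m ∈ W := fun m hm => Submodule.subset_span ⟨m, hm, rfl⟩
  have step : ∀ l ≤ j,
      (ξ l - ξ j) • (prodM A B ϱ ξ (l + 1) * pencilResolvent A B (ξ j)) ∈ W →
      prodM A B ϱ ξ l * pencilResolvent A B (ξ j) ∈ W := by
    intro l hl h
    have hne : ξ j - ϱ l ≠ 0 := sub_ne_zero.2 (hϱ l j (by omega) hj).symm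
    have key : (ξ j - ϱ l) • (prodM A B ϱ ξ l * pencilResolvent A B (ξ j)) =
        prodM A B ϱ ξ (l + 1) - prodM A B ϱ ξ l -
          (ξ l - ξ j) • (prodM A B ϱ ξ (l + 1) * pencilResolvent A B (ξ j)) := by
      rw [← Matrix.mul_smul, sub_smul_pencilResolvent (hξ l (by omega)) (hξ j hj), prodM_succ,
        Matrix.mul_sub, Matrix.mul_sub, Matrix.mul_one, Matrix.mul_smul, Matrix.mul_assoc]
    rw [← inv_smul_smul₀ hne (prodM A B ϱ ξ l * _), key]
    exact W.smul_mem _ (W.sub_mem (W.sub_mem (mem _ (by omega)) (mem _ (by omega))) h)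
  induction hl using Nat.decreasingInduction with
  | self => exact step j le_rfl (by simp)
  | of_succ l hl ih => exact step l hl.le (W.smul_mem _ ih)

theorem prodM_mem_span_prodM (ϱ : ℕ → ℂ) {ϱ' : ℕ → ℂ}
    (hξ : ∀ i, i < K → IsUnit (A - ξ i • B)) (hϱ' : ∀ i j, i < K → j < K → ϱ' i ≠ ξ j)
    {j : ℕ} (hj : j ≤ K) :
    prodM A B ϱ ξ j ∈ Submodule.span ℂ (prodM A B ϱ' ξ '' Set.Iic j) := by
  induction j with
  | zero => exact Submodule.subset_span ⟨0, Set.mem_Iic.2 le_rfl, rfl⟩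
  | succ j ih =>
    set W := Submodule.span ℂ (prodM A B ϱ' ξ '' Set.Iic (j + 1))
    have hPj := ih (by omega)
    have hPj_le : Submodule.span ℂ (prodM A B ϱ' ξ '' Set.Iic j) ≤ W :=
      Submodule.span_mono (Set.image_mono (Set.Iic_subset_Iic.2 j.le_succ))
    have hPj_mul : prodM A B ϱ ξ j * pencilResolvent A B (ξ j) ∈ W := by
      refine Submodule.span_le.2 ?_
        (Submodule.apply_mem_span_image_of_mem_span (LinearMap.mulRight ℂ _) hPj)
      rintro _ ⟨_, ⟨l, hl, rfl⟩, rfl⟩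
      exact prodM_mul_pencilResolvent_mem_span hξ hϱ' (by omega) hl
    rw [prodM_succ, Mfun_eq_one_add (hξ j (by omega)), Matrix.mul_add, Matrix.mul_one,
      Matrix.mul_smul]
    exact W.add_mem (hPj_le hPj) (W.smul_mem _ hPj_mul)

theorem span_prodM_mulVec_le (ϱ : ℕ → ℂ) {ϱ' : ℕ → ℂ} {k : ℕ}
    (hξ : ∀ i, i < k - 1 → IsUnit (A - ξ i • B))
    (hϱ' : ∀ i j, i < k - 1 → j < k - 1 → ϱ' i ≠ ξ j) (v : Fin n → ℂ) :
    Submodule.span ℂ (Set.range fun j : Fin k => prodM A B ϱ ξ j *ᵥ v) ≤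
      Submodule.span ℂ (Set.range fun j : Fin k => prodM A B ϱ' ξ j *ᵥ v) := by
  rw [Submodule.span_le]
  rintro _ ⟨j, rfl⟩
  have hj := Submodule.apply_mem_span_image_of_mem_span ((mulVecBilin ℂ ℂ).flip v)
    (prodM_mem_span_prodM ϱ hξ hϱ' (j := j) (by omega))
  refine Submodule.span_mono ?_ hj
  rintro _ ⟨_, ⟨m, hm, rfl⟩, rfl⟩
  exact ⟨⟨m, by simp at hm; omega⟩, rfl⟩

end ShiftInvariance

theorem nested_shift_invariance_general {n : ℕ}
    (A B : Matrix (Fin n) (Fin n) ℂ) (k : ℕ)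
    (ξ ϱ : ℕ → ℂ) (ϱ' : ℂ)
    (hξ : ∀ i, i < k - 1 → IsUnit (A - ξ i • B))
    (hϱ : ∀ i j, i < k - 1 → j < k - 1 → ϱ i ≠ ξ j)
    (hϱ' : ∀ j, j < k - 1 → ϱ' ≠ ξ j)
    (v : Fin n → ℂ) :
    Submodule.span ℂ (Set.range fun j : Fin k => (prodM A B ϱ ξ j).mulVec v) =
      Submodule.span ℂ
        (Set.range fun j : Fin k => (prodM A B (fun _ => ϱ') ξ j).mulVec v) :=
  le_antisymm (span_prodM_mulVec_le ϱ hξ (fun _ j _ hj => hϱ' j hj) v)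
    (span_prodM_mulVec_le _ hξ hϱ v)

/-- Nested shift invariance: the rational Krylov subspace
span{v, M(ϱ₁,ξ₁)v, …, ∏ M(ϱᵢ,ξᵢ) v} is independent of the choice of shifts. -/
theorem nested_shift_invariance {n : ℕ}
    (A B : Matrix (Fin n) (Fin n) ℂ) (k : ℕ)
    (ξ ϱ : ℕ → ℂ) (ϱ' : ℂ)
    (hξ : ∀ i, i < k - 1 → IsUnit (A - ξ i • B))
    (hϱ : ∀ i j, i < k - 1 → j < k - 1 → ϱ i ≠ ξ j)
    (hϱ' : ∀ j, j < k - 1 → ϱ' ≠ ξ j)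
    (v : Fin n → ℂ) (hv : v ≠ 0) :
    Submodule.span ℂ (Set.range fun j : Fin k => (prodM A B ϱ ξ j).mulVec v) =
      Submodule.span ℂ
        (Set.range fun j : Fin k => (prodM A B (fun _ => ϱ') ξ j).mulVec v) :=
  nested_shift_invariance_general A B k ξ ϱ ϱ' hξ hϱ hϱ' v
end

section
/- Let (A,B) be a regular matrix pair in ℂ^{n×n}, and let Q̂, Q̌, Ẑ, Ž be unitary matrices with Q̂e_1 = σQ̌e_1 for some |σ| = 1, such that (Â, B̂) = Q̂*(A,B)Ẑ and (Ǎ, B̌) = Q̌*(A,B)Ž are both proper Hessenberg pairs with the same finite pole tuple Ξ = (ξ_1,…,ξ_{n−1}), where no pole is an eigenvalue of (A,B). Then there exist unitary diagonal matrices D_1, D_2 with Â = D_1* Ǎ D_2 and B̂ = D_1* B̌ D_2; equivalently, Q̂ = Q̌D_1 and Ẑ = ŽD_2 (implicit Q theorem for proper Hessenberg pairs). -/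
/-!
Put `U = Q₂ᴴ Q₁` and `V = Z₂ᴴ Z₁`: they are unitary, `U A₁ = A₂ V`, `U B₁ = B₂ V` and
`U e₀ ∈ span e₀`. By induction on `k`, both `U` and `V` map `span {e₀, …, e_k}` into itself.
For `V` this is read off `V = (A₂ - ξ_k B₂)⁻¹ U (A₁ - ξ_k B₁)`: both pencils are Hessenberg with
vanishing `(k+1, k)` entry, so they and the inverse preserve `span {e₀, …, e_k}`. For `U` at
`k + 1`, column `k` of `B₂ V` has no component beyond `e_{k+1}`, while in `U B₁` the vector
`U e_{k+1}` enters with the nonzero coefficient `(B₁)_{k+1,k}`. So `U` and `V` are upper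
triangular and unitary, hence diagonal.
-/

open Matrix

namespace Matrix

theorem blockTriangular_lt_iff {ι R : Type*} [LinearOrder ι] [Zero R] {M : Matrix ι ι R}
    {k : ι} : M.BlockTriangular (k < ·) ↔ ∀ ⦃i j⦄, j ≤ k → k < i → M i j = 0 := by
  refine ⟨fun h i j hj hi => h ?_, fun h i j hij => ?_⟩
  · exact lt_iff_not_ge.2 fun hle => (not_lt.2 hj) (hle hi)
  · obtain ⟨hi, hj⟩ := Classical.not_imp.1 (lt_iff_not_ge.1 hij)
    exact h (not_lt.1 hj) hi

theorem isUpperTriangular_of_forall_blockTriangular_lt {ι R : Type*} [LinearOrder ι] [Zero R]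
    {M : Matrix ι ι R} (h : ∀ k, M.BlockTriangular (k < ·)) : M.IsUpperTriangular :=
  fun _ j hji => blockTriangular_lt_iff.1 (h j) le_rfl hji

variable {ι R : Type*} [Fintype ι] [DecidableEq ι] [CommRing R]

theorem BlockTriangular.of_mul_eq_mul {α : Type*} [LinearOrder α] {b : ι → α}
    {M N U V : Matrix ι ι R} (h : M * V = U * N) (hdet : IsUnit M.det)
    (hM : M.BlockTriangular b) (hU : U.BlockTriangular b) (hN : N.BlockTriangular b) :
    V.BlockTriangular b := by
  have := M.invertibleOfIsUnitDet hdet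
  have hV : V = M⁻¹ * (U * N) := by
    rw [← h, ← Matrix.mul_assoc, inv_mul_of_invertible, Matrix.one_mul]
  exact hV ▸ (blockTriangular_inv_of_blockTriangular hM).mul (hU.mul hN)

variable [StarRing R]

theorem IsUpperTriangular.isDiag_of_mem_unitaryGroup [LinearOrder ι] {U : Matrix ι ι R}
    (hU : U.IsUpperTriangular) (hunit : U ∈ unitaryGroup ι R) : U.IsDiag := by
  have hinv : U⁻¹ = star U := inv_eq_left_inv (mem_unitaryGroup_iff'.1 hunit)
  have := U.invertibleOfIsUnitDet (UnitaryGroup.det_isUnit ⟨U, hunit⟩)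
  have hstar : (star U).IsUpperTriangular := hinv ▸ blockTriangular_inv_of_blockTriangular hU
  intro i j hij
  rcases lt_or_gt_of_ne hij with hlt | hgt
  · simpa using hstar hlt
  · exact hU hgt

theorem conjTranspose_mul_mul_mul_eq_of_mem_unitaryGroup {Q₁ Q₂ Z₁ Z₂ : Matrix ι ι R}
    (hQ₂ : Q₂ ∈ unitaryGroup ι R) (hZ₂ : Z₂ ∈ unitaryGroup ι R) (M : Matrix ι ι R) :
    (Q₂ᴴ * Q₁)ᴴ * (Q₂ᴴ * M * Z₂) * (Z₂ᴴ * Z₁) = Q₁ᴴ * M * Z₁ := by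
  have hQ : Q₂ * Q₂ᴴ = 1 := mem_unitaryGroup_iff.1 hQ₂
  have hZ : Z₂ * Z₂ᴴ = 1 := mem_unitaryGroup_iff.1 hZ₂
  simp only [conjTranspose_mul, conjTranspose_conjTranspose, Matrix.mul_assoc]
  rw [← Matrix.mul_assoc Q₂, hQ, Matrix.one_mul, ← Matrix.mul_assoc Z₂, hZ, Matrix.one_mul]

theorem mul_eq_mul_of_eq_conjTranspose_mul_mul {U V X Y : Matrix ι ι R}
    (hU : U ∈ unitaryGroup ι R) (h : X = Uᴴ * Y * V) : U * X = Y * V := by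
  have hU' : U * Uᴴ = 1 := mem_unitaryGroup_iff.1 hU
  rw [h, ← Matrix.mul_assoc, ← Matrix.mul_assoc, hU', Matrix.one_mul]

theorem isUnit_det_conjTranspose_mul_mul {Q Z M : Matrix ι ι R} (hQ : Q ∈ unitaryGroup ι R)
    (hZ : Z ∈ unitaryGroup ι R) (hM : IsUnit M.det) : IsUnit (Qᴴ * M * Z).det := by
  rw [det_mul, det_mul]
  exact ((UnitaryGroup.det_isUnit (star ⟨Q, hQ⟩)).mul hM).mul
    (UnitaryGroup.det_isUnit ⟨Z, hZ⟩)

end Matrix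

section Hessenberg

variable {n : ℕ}

theorem UpperHessenberg.sub_smul {A B : Matrix (Fin n) (Fin n) ℂ} (hA : UpperHessenberg A)
    (hB : UpperHessenberg B) (c : ℂ) : UpperHessenberg (A - c • B) := fun i j hij => by
  simp [hA i j hij, hB i j hij]

theorem UpperHessenberg.blockTriangular_castSucc_lt {A : Matrix (Fin (n + 1)) (Fin (n + 1)) ℂ}
    (hA : UpperHessenberg A) (p : Fin n) (hp : A p.succ p.castSucc = 0) :
    A.BlockTriangular (p.castSucc < ·) := by
  refine blockTriangular_lt_iff.2 fun i j hj hi => ?_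
  rcases Nat.lt_or_ge (j + 1) i with hji | hij
  · exact hA i j hji
  · rw [Fin.le_def, Fin.val_castSucc] at hj
    rw [Fin.lt_def, Fin.val_castSucc] at hi
    rwa [show i = p.succ from Fin.ext (by simp; omega),
      show j = p.castSucc from Fin.ext (by simp; omega)]

theorem blockTriangular_succ_lt_of_mul_eq_mul
    {U V B₁ B₂ : Matrix (Fin (n + 1)) (Fin (n + 1)) ℂ} (h : U * B₁ = B₂ * V)
    (hB₁ : UpperHessenberg B₁) (hB₂ : UpperHessenberg B₂) (p : Fin n)
    (hp : B₁ p.succ p.castSucc ≠ 0) (hU : U.BlockTriangular (p.castSucc < ·))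
    (hV : V.BlockTriangular (p.castSucc < ·)) : U.BlockTriangular (p.succ < ·) := by
  rw [blockTriangular_lt_iff] at hU hV ⊢
  intro i j hj hi
  have hpi : p.castSucc < i := Fin.castSucc_lt_succ.trans hi
  rcases hj.lt_or_eq with hj | rfl
  · exact hU (Fin.le_castSucc_iff.2 hj) hpi
  have hlhs : (U * B₁) i p.castSucc = U i p.succ * B₁ p.succ p.castSucc := by
    refine (mul_apply ..).trans (Finset.sum_eq_single_of_mem _ (Finset.mem_univ _) fun l _ hl => ?_)
    rcases le_or_gt l p.castSucc with hlp | hpl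
    · rw [hU hlp hpi, zero_mul]
    · have := Fin.val_ne_of_ne hl
      rw [hB₁ l _ (by simp [Fin.lt_def] at hpl this ⊢; omega), mul_zero]
  have hrhs : (B₂ * V) i p.castSucc = 0 := by
    refine (mul_apply ..).trans (Finset.sum_eq_zero fun l _ => ?_)
    rcases le_or_gt l p.castSucc with hlp | hpl
    · rw [hB₂ i l (by simp [Fin.lt_def, Fin.le_def] at hlp hi ⊢; omega), zero_mul]
    · rw [hV le_rfl hpl, mul_zero]
  exact (mul_eq_zero.1 (hlhs.symm.trans (h ▸ hrhs))).resolve_right hp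

theorem isDiag_of_mul_eq_mul_of_upperHessenberg
    {U V A₁ B₁ A₂ B₂ : Matrix (Fin (n + 1)) (Fin (n + 1)) ℂ}
    (hU : U ∈ unitaryGroup (Fin (n + 1)) ℂ) (hV : V ∈ unitaryGroup (Fin (n + 1)) ℂ)
    (hA : U * A₁ = A₂ * V) (hB : U * B₁ = B₂ * V) (hU₀ : ∀ i, i ≠ 0 → U i 0 = 0)
    (hA₁ : UpperHessenberg A₁) (hB₁ : UpperHessenberg B₁)
    (hA₂ : UpperHessenberg A₂) (hB₂ : UpperHessenberg B₂) (ξ : Fin n → ℂ)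
    (hpoles₁ : ∀ p : Fin n, B₁ p.succ p.castSucc ≠ 0 ∧
      A₁ p.succ p.castSucc = ξ p * B₁ p.succ p.castSucc)
    (hpoles₂ : ∀ p : Fin n, A₂ p.succ p.castSucc = ξ p * B₂ p.succ p.castSucc)
    (hdet : ∀ p : Fin n, IsUnit (A₂ - ξ p • B₂).det) : U.IsDiag ∧ V.IsDiag := by
  have hpencil (p : Fin n) : (A₂ - ξ p • B₂) * V = U * (A₁ - ξ p • B₁) := by
    rw [Matrix.sub_mul, Matrix.mul_sub, Matrix.smul_mul, Matrix.mul_smul, hA, hB]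
  have hV_of_hU (k : Fin (n + 1)) (hUk : U.BlockTriangular (k < ·)) :
      V.BlockTriangular (k < ·) := by
    induction k using Fin.lastCases with
    | last => exact blockTriangular_lt_iff.2 fun i _ _ hi => absurd hi (Fin.le_last i).not_gt
    | cast p =>
      refine BlockTriangular.of_mul_eq_mul (hpencil p) (hdet p) ?_ hUk ?_
      · exact (hA₂.sub_smul hB₂ _).blockTriangular_castSucc_lt p (by simp [hpoles₂])
      · exact (hA₁.sub_smul hB₁ _).blockTriangular_castSucc_lt p (by simp [(hpoles₁ p).2])
  have hflag (k : Fin (n + 1)) : U.BlockTriangular (k < ·) ∧ V.BlockTriangular (k < ·) := by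
    induction k using Fin.induction with
    | zero =>
      have hU0 : U.BlockTriangular ((0 : Fin (n + 1)) < ·) :=
        blockTriangular_lt_iff.2 fun i j hj hi => (nonpos_iff_eq_zero.1 hj) ▸ hU₀ i hi.ne'
      exact ⟨hU0, hV_of_hU 0 hU0⟩
    | succ p ih =>
      have hUp := blockTriangular_succ_lt_of_mul_eq_mul hB hB₁ hB₂ p (hpoles₁ p).1 ih.1 ih.2
      exact ⟨hUp, hV_of_hU _ hUp⟩
  have hUtri := isUpperTriangular_of_forall_blockTriangular_lt fun k => (hflag k).1
  have hVtri := isUpperTriangular_of_forall_blockTriangular_lt fun k => (hflag k).2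
  exact ⟨hUtri.isDiag_of_mem_unitaryGroup hU, hVtri.isDiag_of_mem_unitaryGroup hV⟩

end Hessenberg

theorem implicit_Q_theorem_general {n : ℕ}
    (A B : Matrix (Fin (n + 1)) (Fin (n + 1)) ℂ)
    (Q₁ Q₂ Z₁ Z₂ : Matrix (Fin (n + 1)) (Fin (n + 1)) ℂ)
    (hQ₁ : Q₁ ∈ Matrix.unitaryGroup (Fin (n + 1)) ℂ)
    (hQ₂ : Q₂ ∈ Matrix.unitaryGroup (Fin (n + 1)) ℂ)
    (hZ₁ : Z₁ ∈ Matrix.unitaryGroup (Fin (n + 1)) ℂ)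
    (hZ₂ : Z₂ ∈ Matrix.unitaryGroup (Fin (n + 1)) ℂ)
    (σ : ℂ)
    (hfirst : (fun i => Q₁ i 0) = fun i => σ * Q₂ i 0)
    (A₁ B₁ A₂ B₂ : Matrix (Fin (n + 1)) (Fin (n + 1)) ℂ)
    (hA₁ : A₁ = Q₁ᴴ * A * Z₁) (hB₁ : B₁ = Q₁ᴴ * B * Z₁)
    (hA₂ : A₂ = Q₂ᴴ * A * Z₂) (hB₂ : B₂ = Q₂ᴴ * B * Z₂)
    (h₁ : ProperHessPair A₁ B₁) (h₂ : ProperHessPair A₂ B₂)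
    (ξ : Fin n → ℂ)
    (hpoles₁ : ∀ i : Fin n, B₁ i.succ i.castSucc ≠ 0 ∧
      A₁ i.succ i.castSucc = ξ i * B₁ i.succ i.castSucc)
    (hpoles₂ : ∀ i : Fin n, B₂ i.succ i.castSucc ≠ 0 ∧
      A₂ i.succ i.castSucc = ξ i * B₂ i.succ i.castSucc)
    (heig : ∀ i : Fin n, (A - ξ i • B).det ≠ 0) :
    ∃ D₁ D₂ : Matrix (Fin (n + 1)) (Fin (n + 1)) ℂ,
      D₁.IsDiag ∧ D₂.IsDiag ∧
      D₁ ∈ Matrix.unitaryGroup (Fin (n + 1)) ℂ ∧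
      D₂ ∈ Matrix.unitaryGroup (Fin (n + 1)) ℂ ∧
      A₁ = D₁ᴴ * A₂ * D₂ ∧ B₁ = D₁ᴴ * B₂ * D₂ ∧
      Q₁ = Q₂ * D₁ ∧ Z₁ = Z₂ * D₂ := by
  have hU : Q₂ᴴ * Q₁ ∈ unitaryGroup (Fin (n + 1)) ℂ :=
    mul_mem (Unitary.star_mem hQ₂) hQ₁
  have hV : Z₂ᴴ * Z₁ ∈ unitaryGroup (Fin (n + 1)) ℂ :=
    mul_mem (Unitary.star_mem hZ₂) hZ₁
  have hA : A₁ = (Q₂ᴴ * Q₁)ᴴ * A₂ * (Z₂ᴴ * Z₁) := by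
    rw [hA₁, hA₂, conjTranspose_mul_mul_mul_eq_of_mem_unitaryGroup hQ₂ hZ₂]
  have hB : B₁ = (Q₂ᴴ * Q₁)ᴴ * B₂ * (Z₂ᴴ * Z₁) := by
    rw [hB₁, hB₂, conjTranspose_mul_mul_mul_eq_of_mem_unitaryGroup hQ₂ hZ₂]
  have hU₀ (i : Fin (n + 1)) (hi : i ≠ 0) : (Q₂ᴴ * Q₁) i 0 = 0 := by
    have hcol : (Q₂ᴴ * Q₁) i 0 = σ * (Q₂ᴴ * Q₂) i 0 := by
      simp only [mul_apply, congrFun hfirst, Finset.mul_sum, mul_left_comm σ]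
    have hQ₂' : Q₂ᴴ * Q₂ = 1 := mem_unitaryGroup_iff'.1 hQ₂
    rw [hcol, hQ₂', one_apply_ne hi, mul_zero]
  have hdet (p : Fin n) : IsUnit (A₂ - ξ p • B₂).det := by
    have hpencil : A₂ - ξ p • B₂ = Q₂ᴴ * (A - ξ p • B) * Z₂ := by
      rw [hA₂, hB₂, Matrix.mul_sub, Matrix.sub_mul, Matrix.mul_smul, Matrix.smul_mul]
    exact hpencil ▸ isUnit_det_conjTranspose_mul_mul hQ₂ hZ₂ (heig p).isUnit
  obtain ⟨hUdiag, hVdiag⟩ := isDiag_of_mul_eq_mul_of_upperHessenberg hU hV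
    (mul_eq_mul_of_eq_conjTranspose_mul_mul hU hA) (mul_eq_mul_of_eq_conjTranspose_mul_mul hU hB)
    hU₀ h₁.1 h₁.2.1 h₂.1 h₂.2.1 ξ hpoles₁ (fun p => (hpoles₂ p).2) hdet
  have hQ₂' : Q₂ * Q₂ᴴ = 1 := mem_unitaryGroup_iff.1 hQ₂
  have hZ₂' : Z₂ * Z₂ᴴ = 1 := mem_unitaryGroup_iff.1 hZ₂
  refine ⟨_, _, hUdiag, hVdiag, hU, hV, hA, hB, ?_, ?_⟩
  · rw [← Matrix.mul_assoc, hQ₂', Matrix.one_mul]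
  · rw [← Matrix.mul_assoc, hZ₂', Matrix.one_mul]

/-- Implicit Q theorem for proper Hessenberg pairs: two unitary equivalences of a regular
pair to proper Hessenberg form with the same finite pole tuple (poles not eigenvalues) and
essentially the same first column of Q are essentially identical. -/
theorem implicit_Q_theorem {n : ℕ}
    (A B : Matrix (Fin (n + 1)) (Fin (n + 1)) ℂ)
    (hreg : ∃ α β : ℂ, (β • A - α • B).det ≠ 0)
    (Q₁ Q₂ Z₁ Z₂ : Matrix (Fin (n + 1)) (Fin (n + 1)) ℂ)
    (hQ₁ : Q₁ ∈ Matrix.unitaryGroup (Fin (n + 1)) ℂ)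
    (hQ₂ : Q₂ ∈ Matrix.unitaryGroup (Fin (n + 1)) ℂ)
    (hZ₁ : Z₁ ∈ Matrix.unitaryGroup (Fin (n + 1)) ℂ)
    (hZ₂ : Z₂ ∈ Matrix.unitaryGroup (Fin (n + 1)) ℂ)
    (σ : ℂ) (hσ : ‖σ‖ = 1)
    (hfirst : (fun i => Q₁ i 0) = fun i => σ * Q₂ i 0)
    (A₁ B₁ A₂ B₂ : Matrix (Fin (n + 1)) (Fin (n + 1)) ℂ)
    (hA₁ : A₁ = Q₁ᴴ * A * Z₁) (hB₁ : B₁ = Q₁ᴴ * B * Z₁)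
    (hA₂ : A₂ = Q₂ᴴ * A * Z₂) (hB₂ : B₂ = Q₂ᴴ * B * Z₂)
    (h₁ : ProperHessPair A₁ B₁) (h₂ : ProperHessPair A₂ B₂)
    (ξ : Fin n → ℂ)
    (hpoles₁ : ∀ i : Fin n, B₁ i.succ i.castSucc ≠ 0 ∧
      A₁ i.succ i.castSucc = ξ i * B₁ i.succ i.castSucc)
    (hpoles₂ : ∀ i : Fin n, B₂ i.succ i.castSucc ≠ 0 ∧
      A₂ i.succ i.castSucc = ξ i * B₂ i.succ i.castSucc)
    (heig : ∀ i : Fin n, (A - ξ i • B).det ≠ 0) :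
    ∃ D₁ D₂ : Matrix (Fin (n + 1)) (Fin (n + 1)) ℂ,
      D₁.IsDiag ∧ D₂.IsDiag ∧
      D₁ ∈ Matrix.unitaryGroup (Fin (n + 1)) ℂ ∧
      D₂ ∈ Matrix.unitaryGroup (Fin (n + 1)) ℂ ∧
      A₁ = D₁ᴴ * A₂ * D₂ ∧ B₁ = D₁ᴴ * B₂ * D₂ ∧
      Q₁ = Q₂ * D₁ ∧ Z₁ = Z₂ * D₂ :=
  implicit_Q_theorem_general A B Q₁ Q₂ Z₁ Z₂ hQ₁ hQ₂ hZ₁ hZ₂ σ hfirst A₁ B₁ A₂ B₂ hA₁ hB₁ hA₂ hB₂ h₁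
    h₂ ξ hpoles₁ hpoles₂ heig
end

section
/- Let (A,B) be an n×n complex matrix pair, ξ_1 ∈ ℂ not an eigenvalue of the pencil, ξ̂_1 ∈ ℂ with ξ̂_1 ≠ ξ_1, and suppose (A,B) is an upper Hessenberg pair whose first pole is ξ_1 (i.e., a_{21} = ξ_1 b_{21}, with not both a_{21}, b_{21} zero). Let x = (A − ξ̂_1 B)e_1. Then x has at most its first two components nonzero, and if Q_1 is any unitary matrix with Q_1* x = α e_1 (α ≠ 0) acting only on the first two coordinates, then the pair (Â, B̂) = (Q_1*A, Q_1*B) is upper Hessenberg with first pole ξ̂_1, i.e., â_{21} = ξ̂_1 b̂_{21}. -/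
open Matrix

/-- Changing the first pole of a Hessenberg pair: the vector x = (A − ξ̂₁B)e₁ has at most
two nonzero leading components, and any unitary Q₁ acting on the first two coordinates
that maps x to a nonzero multiple of e₁ turns (Q₁*A, Q₁*B) into a Hessenberg pair whose
first pole is ξ̂₁. -/
theorem change_first_pole {n : ℕ}
    (A B : Matrix (Fin (n + 2)) (Fin (n + 2)) ℂ)
    (hA : UpperHessenberg A) (hB : UpperHessenberg B)
    (ξ₁ ξ₁' : ℂ)
    (hpole : A 1 0 = ξ₁ * B 1 0)
    (hproper : ¬(A 1 0 = 0 ∧ B 1 0 = 0))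
    (heig : (A - ξ₁ • B).det ≠ 0)
    (hne : ξ₁' ≠ ξ₁) :
    (∀ i : Fin (n + 2), 1 < (i : ℕ) → (A - ξ₁' • B).mulVec (Pi.single 0 1) i = 0) ∧
    ∀ (Q₁ : Matrix (Fin (n + 2)) (Fin (n + 2)) ℂ),
      Q₁ ∈ Matrix.unitaryGroup (Fin (n + 2)) ℂ →
      (∀ i j : Fin (n + 2), 1 < (i : ℕ) → 1 < (j : ℕ) →
        Q₁ i j = if i = j then 1 else 0) →
      (∀ i j : Fin (n + 2), (i : ℕ) < 2 → 1 < (j : ℕ) → Q₁ i j = 0) →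
      (∀ i j : Fin (n + 2), 1 < (i : ℕ) → (j : ℕ) < 2 → Q₁ i j = 0) →
      ∀ α : ℂ, α ≠ 0 →
      Q₁ᴴ.mulVec ((A - ξ₁' • B).mulVec (Pi.single 0 1)) = α • (Pi.single 0 1 : Fin (n + 2) → ℂ) →
      UpperHessenberg (Q₁ᴴ * A) ∧ UpperHessenberg (Q₁ᴴ * B) ∧
        (Q₁ᴴ * A) 1 0 = ξ₁' * (Q₁ᴴ * B) 1 0 := by
  have hmv : ∀ (M : Matrix (Fin (n+2)) (Fin (n+2)) ℂ) (i : Fin (n+2)),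
      M.mulVec (Pi.single 0 1) i = M i 0 := by
    intro M i
    simp [Matrix.mulVec, dotProduct, Pi.single_apply]
  constructor
  · intro i hi
    have h0 : ((0 : Fin (n+2)) : ℕ) + 1 < (i : ℕ) := by
      simpa using hi
    rw [hmv]
    simp [Matrix.sub_apply, Matrix.smul_apply, hA i 0 h0, hB i 0 h0]
  · intro Q₁ hQu h1 h2 h3 α hα hQx
    have key : ∀ (M : Matrix (Fin (n+2)) (Fin (n+2)) ℂ) (i j : Fin (n+2)),
        1 < (i : ℕ) → (Q₁ᴴ * M) i j = M i j := by
      intro M i j hi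
      rw [Matrix.mul_apply, Finset.sum_eq_single i]
      · simp [Matrix.conjTranspose_apply, h1 i i hi hi]
      · intro k _ hk
        rcases lt_or_ge (k : ℕ) 2 with h | h
        · simp [Matrix.conjTranspose_apply, h2 k i (by omega) hi]
        · simp [Matrix.conjTranspose_apply, h1 k i (by omega) hi, hk]
      · intro h
        exact absurd (Finset.mem_univ i) h
    refine ⟨?_, ?_, ?_⟩
    · intro i j hij
      rw [key A i j (by omega)]
      exact hA i j hij
    · intro i j hij
      rw [key B i j (by omega)]
      exact hB i j hij
    · have h := congrFun hQx 1
      rw [Matrix.mulVec_mulVec, hmv] at h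
      have h10 : (1 : Fin (n+2)) ≠ 0 := by
        simp [Fin.ext_iff]
      rw [Pi.smul_apply, Pi.single_eq_of_ne h10, smul_zero] at h
      rw [Matrix.mul_sub, Matrix.mul_smul] at h
      simp only [Matrix.sub_apply, Matrix.smul_apply, smul_eq_mul] at h
      exact sub_eq_zero.mp h
end
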